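/- The Hecke algebra H_q(Σ_r) over a field k with q ∈ k^×, equipped with the bilinear form extending ⟨T_u, T_v⟩ = q^{ℓ(u)} if u = v⁻¹ and 0 otherwise, is a symmetric algebra. -/

import Mathlib

/-!
Statement 4: The Hecke algebra `H_q(Σ_r)` over a field `k` with `q ∈ kˣ`, equipped
with the bilinear form extending `⟨T_u, T_v⟩ = q^{ℓ(u)}` if `u = v⁻¹` and `0`
otherwise, is a symmetric algebra.

The Hecke algebra is characterised here as a `k`-algebra `H` with a basis
`{T_w : w ∈ Σ_r}` such that `T_1 = 1` and the usual multiplication rules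
`T_s T_w = T_{sw}` when `ℓ(sw) = ℓ(w) + 1` and
`T_s T_w = q T_{sw} + (q-1) T_w` when `ℓ(sw) = ℓ(w) - 1`
hold for simple transpositions `s` (these rules together with the basis property are
equivalent to the standard presentation by generators `T_i` with braid relations and
quadratic relations `(T_i - q)(T_i + 1) = 0`).
-/

variable {r : ℕ}

/-- The length of a permutation: its number of inversions. -/
def heckeLen (w : Equiv.Perm (Fin r)) : ℕ :=
  (Finset.univ.filter fun p : Fin r × Fin r => p.1 < p.2 ∧ w p.2 < w p.1).card

/-- The simple transposition `(i, i+1)`. -/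
def simpleRefl (i : Fin r) (hi : (i : ℕ) + 1 < r) : Equiv.Perm (Fin r) :=
  Equiv.swap i ⟨(i : ℕ) + 1, hi⟩

/-- The symmetrising bilinear form of the Hecke algebra, extending
`⟨T_u, T_v⟩ = q^{ℓ(u)}` if `u = v⁻¹` and `0` otherwise. -/
noncomputable def heckeForm {k : Type*} [Field k] {H : Type*} [Ring H] [Algebra k H]
    (q : k) (T : Module.Basis (Equiv.Perm (Fin r)) k H) (x y : H) : k :=
  (T.repr x).sum fun u cu => cu * (T.repr y u⁻¹) * q ^ heckeLen u

/-! The trace `τ = T.coord 1` satisfies `τ(T_u T_v) = δ_{v,u⁻¹} q^{ℓ(u)}`: by induction on `ℓ(u)`,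
write `u = u' s` with `ℓ(u') = ℓ(u) - 1`, so that `T_u T_v = T_{u'} (T_s T_v)`, and expand
`T_s T_v` by the multiplication rules. Hence `⟨x, y⟩ = τ(xy)`, which makes the form associative.
Symmetry and non-degeneracy are read off `⟨x, y⟩ = ∑_u x_u y_{u⁻¹} q^{ℓ(u)}`, using
`ℓ(u⁻¹) = ℓ(u)` and `q ≠ 0`. -/

theorem heckeLen_one : heckeLen (1 : Equiv.Perm (Fin r)) = 0 := by
  rw [heckeLen, Finset.card_eq_zero, Finset.filter_eq_empty_iff]
  exact fun _ _ h => lt_asymm h.1 h.2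

theorem heckeLen_inv (w : Equiv.Perm (Fin r)) : heckeLen w⁻¹ = heckeLen w := by
  refine Finset.card_nbij' (fun p => (w⁻¹ p.2, w⁻¹ p.1)) (fun p => (w p.2, w p.1)) ?_ ?_ ?_ ?_
    <;> intro p <;> simp +contextual

theorem simpleRefl_mul_self (i : Fin r) (hi : (i : ℕ) + 1 < r) :
    simpleRefl i hi * simpleRefl i hi = 1 :=
  Equiv.swap_mul_self _ _

theorem simpleRefl_inv (i : Fin r) (hi : (i : ℕ) + 1 < r) :
    (simpleRefl i hi)⁻¹ = simpleRefl i hi :=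
  Equiv.swap_inv _ _

@[simp]
theorem simpleRefl_mul_simpleRefl_mul (i : Fin r) (hi : (i : ℕ) + 1 < r)
    (w : Equiv.Perm (Fin r)) : simpleRefl i hi * (simpleRefl i hi * w) = w := by
  rw [← mul_assoc, simpleRefl_mul_self, one_mul]

@[simp]
theorem mul_simpleRefl_mul_simpleRefl (w : Equiv.Perm (Fin r)) (i : Fin r)
    (hi : (i : ℕ) + 1 < r) : w * simpleRefl i hi * simpleRefl i hi = w := by
  rw [mul_assoc, simpleRefl_mul_self, mul_one]

theorem heckeLen_simpleRefl_mul_of_lt {i : Fin r} (hi : (i : ℕ) + 1 < r) {w : Equiv.Perm (Fin r)}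
    (h : w⁻¹ i < w⁻¹ ⟨i + 1, hi⟩) :
    heckeLen (simpleRefl i hi * w) = heckeLen w + 1 := by
  have inversions_eq : (Finset.univ.filter fun p : Fin r × Fin r =>
        p.1 < p.2 ∧ (simpleRefl i hi * w) p.2 < (simpleRefl i hi * w) p.1) =
      insert (w⁻¹ i, w⁻¹ ⟨i + 1, hi⟩)
        (Finset.univ.filter fun p : Fin r × Fin r => p.1 < p.2 ∧ w p.2 < w p.1) := by
    ext ⟨a, b⟩
    obtain ⟨x, rfl⟩ := (w⁻¹).surjective a
    obtain ⟨y, rfl⟩ := (w⁻¹).surjective b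
    simp only [Finset.mem_filter_univ, Finset.mem_insert]
    simp only [simpleRefl, Prod.mk.injEq, Equiv.Perm.mul_apply, Equiv.Perm.coe_inv,
      Equiv.apply_symm_apply, EmbeddingLike.apply_eq_iff_eq, Equiv.swap_apply_def]
    split_ifs <;> subst_vars <;>
      simp only [Equiv.Perm.coe_inv, Fin.ext_iff, Fin.lt_def, and_self, true_or, iff_true] at * <;>
      omega
  rw [heckeLen, heckeLen, inversions_eq, Finset.card_insert_of_notMem]
  simp [Fin.le_def]

theorem heckeLen_simpleRefl_mul_of_gt {i : Fin r} (hi : (i : ℕ) + 1 < r) {w : Equiv.Perm (Fin r)}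
    (h : w⁻¹ ⟨i + 1, hi⟩ < w⁻¹ i) :
    heckeLen (simpleRefl i hi * w) + 1 = heckeLen w := by
  have h' : (simpleRefl i hi * w)⁻¹ i < (simpleRefl i hi * w)⁻¹ ⟨i + 1, hi⟩ := by
    simpa [simpleRefl] using h
  rw [← heckeLen_simpleRefl_mul_of_lt hi h', simpleRefl_mul_simpleRefl_mul]

theorem heckeLen_simpleRefl_mul_eq_or (i : Fin r) (hi : (i : ℕ) + 1 < r)
    (w : Equiv.Perm (Fin r)) :
    heckeLen (simpleRefl i hi * w) = heckeLen w + 1 ∨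
      heckeLen (simpleRefl i hi * w) + 1 = heckeLen w := by
  rcases lt_or_gt_of_ne (w⁻¹.injective.ne (a₁ := i) (a₂ := ⟨i + 1, hi⟩) (by simp [Fin.ext_iff]))
    with h | h
  · exact .inl (heckeLen_simpleRefl_mul_of_lt hi h)
  · exact .inr (heckeLen_simpleRefl_mul_of_gt hi h)

theorem heckeLen_mul_simpleRefl_eq_or (w : Equiv.Perm (Fin r)) (i : Fin r)
    (hi : (i : ℕ) + 1 < r) :
    heckeLen (w * simpleRefl i hi) = heckeLen w + 1 ∨
      heckeLen (w * simpleRefl i hi) + 1 = heckeLen w := by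
  rw [← heckeLen_inv (w * _), mul_inv_rev, simpleRefl_inv, ← heckeLen_inv w]
  exact heckeLen_simpleRefl_mul_eq_or i hi w⁻¹

theorem Equiv.Perm.exists_apply_succ_lt_of_ne_one {σ : Equiv.Perm (Fin r)} (hσ : σ ≠ 1) :
    ∃ (i : Fin r) (hi : (i : ℕ) + 1 < r), σ ⟨i + 1, hi⟩ < σ i := by
  contrapose! hσ
  rw [← Equiv.Perm.monotone_iff]
  cases r with
  | zero => exact fun x => x.elim0
  | succ n => exact Fin.monotone_iff_le_succ.2 fun i => hσ i.castSucc (by simp)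

theorem exists_heckeLen_simpleRefl_mul_lt {w : Equiv.Perm (Fin r)} (hw : w ≠ 1) :
    ∃ (i : Fin r) (hi : (i : ℕ) + 1 < r), heckeLen (simpleRefl i hi * w) + 1 = heckeLen w := by
  obtain ⟨i, hi, h⟩ := Equiv.Perm.exists_apply_succ_lt_of_ne_one (inv_ne_one.2 hw)
  exact ⟨i, hi, heckeLen_simpleRefl_mul_of_gt hi h⟩

theorem exists_heckeLen_mul_simpleRefl_lt {w : Equiv.Perm (Fin r)} (hw : w ≠ 1) :
    ∃ (i : Fin r) (hi : (i : ℕ) + 1 < r), heckeLen (w * simpleRefl i hi) + 1 = heckeLen w := by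
  obtain ⟨i, hi, h⟩ := exists_heckeLen_simpleRefl_mul_lt (inv_ne_one.2 hw)
  refine ⟨i, hi, ?_⟩
  rwa [← heckeLen_inv (w * _), mul_inv_rev, simpleRefl_inv, ← heckeLen_inv w]

section Algebra

variable {k : Type*} [CommRing k] {H : Type*} [Ring H] [Algebra k H] {q : k}
  {T : Module.Basis (Equiv.Perm (Fin r)) k H}

variable (T) in
def MulSimpleReflUp : Prop :=
  ∀ (i : Fin r) (hi : (i : ℕ) + 1 < r) (w : Equiv.Perm (Fin r)),
    heckeLen (simpleRefl i hi * w) = heckeLen w + 1 →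
      T (simpleRefl i hi) * T w = T (simpleRefl i hi * w)

variable (q T) in
def MulSimpleReflDown : Prop :=
  ∀ (i : Fin r) (hi : (i : ℕ) + 1 < r) (w : Equiv.Perm (Fin r)),
    heckeLen (simpleRefl i hi * w) + 1 = heckeLen w →
      T (simpleRefl i hi) * T w = q • T (simpleRefl i hi * w) + (q - 1) • T w

theorem basis_mul_basis_simpleRefl (hone : T 1 = 1) (hup : MulSimpleReflUp T)
    {u : Equiv.Perm (Fin r)} {i : Fin r} {hi : (i : ℕ) + 1 < r}
    (h : heckeLen (u * simpleRefl i hi) = heckeLen u + 1) :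
    T u * T (simpleRefl i hi) = T (u * simpleRefl i hi) := by
  induction hn : heckeLen u using Nat.strong_induction_on generalizing u with
  | _ n ih =>
  rcases eq_or_ne u 1 with rfl | hu1
  · rw [hone, one_mul, one_mul]
  obtain ⟨t, ht, hdesc⟩ := exists_heckeLen_simpleRefl_mul_lt hu1
  obtain ⟨u, rfl⟩ : ∃ u', u = simpleRefl t ht * u' := ⟨_, (simpleRefl_mul_simpleRefl_mul ..).symm⟩
  rw [simpleRefl_mul_simpleRefl_mul] at hdesc
  rw [mul_assoc] at h ⊢
  -- `ℓ(t x)` and `ℓ(x s)` both differ from `ℓ(x)` by one, and `ℓ(t u s) = ℓ(u) + 2`.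
  have hus : heckeLen (u * simpleRefl i hi) = heckeLen u + 1 := by
    have := heckeLen_simpleRefl_mul_eq_or t ht (u * simpleRefl i hi)
    have := heckeLen_mul_simpleRefl_eq_or u i hi
    omega
  rw [← hup t ht u hdesc.symm, mul_assoc, ih _ (by omega) hus rfl, hup t ht _ (by omega)]

theorem coord_one_basis_mul_basis (hone : T 1 = 1) (hup : MulSimpleReflUp T)
    (hdown : MulSimpleReflDown q T) (u v : Equiv.Perm (Fin r)) :
    T.coord 1 (T u * T v) = if v = u⁻¹ then q ^ heckeLen u else 0 := by
  induction hn : heckeLen u using Nat.strong_induction_on generalizing u v with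
  | _ n ih =>
  rcases eq_or_ne u 1 with rfl | hu1
  · simp [hone, ← hn, heckeLen_one, Finsupp.single_apply]
  obtain ⟨i, hi, hdesc⟩ := exists_heckeLen_mul_simpleRefl_lt hu1
  obtain ⟨u, rfl⟩ : ∃ u', u = u' * simpleRefl i hi := ⟨_, (mul_simpleRefl_mul_simpleRefl ..).symm⟩
  rw [mul_simpleRefl_mul_simpleRefl] at hdesc
  have ih' := fun w => ih _ (by omega) u w rfl
  have hsv : simpleRefl i hi * v = u⁻¹ ↔ v = simpleRefl i hi * u⁻¹ := by
    rw [← eq_inv_mul_iff_mul_eq, simpleRefl_inv]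
  have hlen_su : heckeLen (simpleRefl i hi * u⁻¹) = heckeLen u + 1 := by
    rw [← simpleRefl_inv, ← mul_inv_rev, heckeLen_inv]
    omega
  rw [← basis_mul_basis_simpleRefl hone hup hdesc.symm, mul_assoc, mul_inv_rev, simpleRefl_inv]
  rcases heckeLen_simpleRefl_mul_eq_or i hi v with hlen | hlen
  · have hvu : v ≠ simpleRefl i hi * u⁻¹ := by
      rintro rfl
      rw [simpleRefl_mul_simpleRefl_mul, heckeLen_inv] at hlen
      omega
    rw [hup _ _ _ hlen, ih', if_neg (mt hsv.1 hvu), if_neg hvu]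
  · have hvu : v ≠ u⁻¹ := by
      rintro rfl
      rw [hlen_su, heckeLen_inv] at hlen
      omega
    rw [hdown _ _ _ hlen, mul_add, mul_smul_comm, mul_smul_comm, map_add, map_smul, map_smul,
      ih', ih', if_neg hvu, smul_zero, add_zero]
    by_cases hv : v = simpleRefl i hi * u⁻¹
    · rw [if_pos (hsv.2 hv), if_pos hv, smul_eq_mul, ← pow_succ', hdesc, hn]
    · rw [if_neg (mt hsv.1 hv), if_neg hv, smul_zero]

end Algebra

section Form

variable {k : Type*} [Field k] {H : Type*} [Ring H] [Algebra k H] (q : k)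
  (T : Module.Basis (Equiv.Perm (Fin r)) k H)

theorem heckeForm_eq_sum (x y : H) :
    heckeForm q T x y = ∑ u, T.repr x u * T.repr y u⁻¹ * q ^ heckeLen u :=
  Finsupp.sum_fintype _ _ fun _ => by simp only [zero_mul]

theorem heckeForm_comm (x y : H) : heckeForm q T x y = heckeForm q T y x := by
  rw [heckeForm_eq_sum, heckeForm_eq_sum]
  exact Fintype.sum_equiv (Equiv.inv _) _ _ fun u => by simp [heckeLen_inv, mul_comm]

theorem heckeForm_basis_inv (x : H) (u : Equiv.Perm (Fin r)) :
    heckeForm q T x (T u⁻¹) = T.repr x u * q ^ heckeLen u := by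
  simp [heckeForm_eq_sum, Finsupp.single_apply]

theorem eq_zero_of_heckeForm_eq_zero (hq : q ≠ 0) {x : H} (hx : ∀ y, heckeForm q T x y = 0) :
    x = 0 :=
  T.ext_elem fun u => by simpa [heckeForm_basis_inv, hq] using hx (T u⁻¹)

variable {q T}

theorem heckeForm_eq_coord_one_mul (hone : T 1 = 1) (hup : MulSimpleReflUp T)
    (hdown : MulSimpleReflDown q T) (x y : H) :
    heckeForm q T x y = T.coord 1 (x * y) := by
  conv_rhs => rw [← T.sum_repr x, ← T.sum_repr y]
  simp only [Finset.sum_mul_sum, map_sum, smul_mul_smul, map_smul,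
    coord_one_basis_mul_basis hone hup hdown, smul_eq_mul, mul_ite, mul_zero,
    Finset.sum_ite_eq', Finset.mem_univ, if_true, heckeForm_eq_sum]

end Form

/-- The Hecke algebra `H_q(Σ_r)`, for `q` invertible, is a symmetric
algebra via the form `⟨T_u, T_v⟩ = q^{ℓ(u)} δ_{u, v⁻¹}`: this form is symmetric,
associative and non-degenerate. -/
theorem heckeAlgebra_symmetric {k : Type*} [Field k] {H : Type*} [Ring H] [Algebra k H]
    (q : k) (hq : q ≠ 0)
    (T : Module.Basis (Equiv.Perm (Fin r)) k H)
    (hone : T 1 = 1)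
    (hmul_up : ∀ (i : Fin r) (hi : (i : ℕ) + 1 < r) (w : Equiv.Perm (Fin r)),
      heckeLen (simpleRefl i hi * w) = heckeLen w + 1 →
        T (simpleRefl i hi) * T w = T (simpleRefl i hi * w))
    (hmul_down : ∀ (i : Fin r) (hi : (i : ℕ) + 1 < r) (w : Equiv.Perm (Fin r)),
      heckeLen (simpleRefl i hi * w) + 1 = heckeLen w →
        T (simpleRefl i hi) * T w
          = q • T (simpleRefl i hi * w) + (q - 1) • T w) :
    (∀ x y : H, heckeForm q T x y = heckeForm q T y x)
    ∧ (∀ x y z : H, heckeForm q T (x * y) z = heckeForm q T x (y * z))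
    ∧ (∀ x : H, (∀ y : H, heckeForm q T x y = 0) → x = 0) := by
  refine ⟨heckeForm_comm q T, fun x y z => ?_, fun x => eq_zero_of_heckeForm_eq_zero q T hq⟩
  simp only [heckeForm_eq_coord_one_mul hone hmul_up hmul_down, mul_assoc]
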